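/- A pure conditional expression e is a weak SAC tautology if and only if its classicalization ē is a classical tautology. -/
import Mathlib


/-- The three truth values `0`, `1`, `⊥`. -/
inductive Tri : Type
  | zero : Tri
  | one : Tri
  | bot : Tri
deriving DecidableEq

/-- SAC conditioning: `(x |_SAC y) = ⊥` if `y = 0`, and `x` if `y ∈ {1, ⊥}`. -/
def sacCond (x y : Tri) : Tri :=
  match y with
  | .zero => .bot
  | _ => x

/-- Pure conditional expressions: propositional variables closed under the
binary connective `|` alone. `cond a b` denotes `(a | b)`. -/
inductive PureExpr : Type
  | var : ℕ → PureExpr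
  | cond : PureExpr → PureExpr → PureExpr

/-- The SAC value of a pure conditional expression under a 3-valued valuation. -/
def sacEval (v : ℕ → Tri) : PureExpr → Tri
  | .var n => v n
  | .cond a b => sacCond (sacEval v a) (sacEval v b)

/-- The classical value of the classicalization `ē` of a pure conditional
expression under a 2-valued valuation: every `(x | y)` is read as the reversed
implication `y → x`. -/
def clEval (v : ℕ → Bool) : PureExpr → Bool
  | .var n => v n
  | .cond a b => !(clEval v b) || clEval v a

lemma cond_decide (x y : Tri) :
    (!decide (y ≠ Tri.zero) || decide (x ≠ Tri.zero)) = decide (sacCond x y ≠ Tri.zero) := by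
  cases y <;> cases x <;> rfl

lemma key_lemma (v : ℕ → Tri) (e : PureExpr) :
    clEval (fun n => decide (v n ≠ Tri.zero)) e = decide (sacEval v e ≠ Tri.zero) := by
  induction e with
  | var n => rfl
  | cond a b iha ihb =>
    simp only [clEval, sacEval, iha, ihb]
    exact cond_decide _ _

/-- A pure conditional expression is a weak SAC tautology iff its
classicalization is a classical tautology. -/
theorem weak_sac_tautology_iff_classical (e : PureExpr) :
    (∀ v : ℕ → Tri, sacEval v e ≠ Tri.zero) ↔ (∀ v : ℕ → Bool, clEval v e = true) := by
  constructor
  · intro h w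
    have hk := key_lemma (fun n => if w n then Tri.one else Tri.zero) e
    have hw : (fun n => decide ((if w n then Tri.one else Tri.zero) ≠ Tri.zero)) = w := by
      funext n; cases w n <;> simp
    rw [hw] at hk
    rw [hk]
    simpa using h _
  · intro h v
    have hk := key_lemma v e
    rw [h _] at hk
    simpa using hk.symm
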